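/- Let t be a positive integer and λ a t-core partition. Let V(λ) be the set of t-maximal elements of W(λ) = {λ_i - i + (t+1)/2 : i ≥ 1}. Then the sum of the elements of V(λ) equals 0. -/

import Mathlib

/-- Hook length of the cell `c` in the Young diagram `Y`. -/
def YoungDiagram.hook (Y : YoungDiagram) (c : ℕ × ℕ) : ℕ :=
  Y.rowLen c.1 + Y.colLen c.2 - c.1 - c.2 - 1

/-- `Y` is a `t`-core: no hook length is divisible by `t`. -/
def YoungDiagram.IsCore (t : ℕ) (Y : YoungDiagram) : Prop :=
  ∀ c ∈ Y.cells, ¬ (t ∣ Y.hook c)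

/-- The set W(λ) = {λ_i - i + (t+1)/2 : i ≥ 1}, as a set of rationals. -/
def Wset (t : ℕ) (Y : YoungDiagram) : Set ℚ :=
  {x | ∃ i : ℕ, x = (Y.rowLen i : ℚ) - (i + 1) + (t + 1) / 2}

/-- The set of `t`-maximal elements of `X`. -/
def tMax (t : ℕ) (X : Set ℚ) : Set ℚ :=
  {x | x ∈ X ∧ ∀ y ∈ X, (∃ k : ℤ, y - x = (k : ℚ) * t) → y ≤ x}

/-!
Write `β i = λᵢ - i` (rows counted from `0`, so `β i = rowLen i - (i + 1)`); then `W(λ)` is the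
beta-set `B = {β i}` shifted by `(t + 1) / 2`. A gap `β i - k ∉ B` is the hook length of a cell
in row `i`, so for a `t`-core `B` is closed under `x ↦ x - t` and its `t`-maximal elements are
the `x ∈ B` with `x + t ∉ B`. Cut `B` off at `-N` for large `N`: what remains has `N` elements,
the lowest `t` of them fill the interval `[-N, -N + t)`, and `x ↦ x - t` matches the other
`N - t` with the non-maximal ones. Comparing sums, the maximal ones add up to
`∑_{k < t} (k - N) + t (N - t) = -t (t + 1) / 2`, which the shift by `(t + 1) / 2` cancels.
-/

open Finset

theorem Nat.exists_le_apply_and_apply_succ_lt (f : ℕ → ℤ) {v : ℤ} {i n : ℕ} (hin : i ≤ n)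
    (hi : v ≤ f i) (hn : f n < v) : ∃ j, i ≤ j ∧ j < n ∧ v ≤ f j ∧ f (j + 1) < v := by
  induction n, hin using Nat.le_induction with
  | base => exact absurd hi (not_le.2 hn)
  | succ m him ih =>
    by_cases hm : f m < v
    · obtain ⟨j, hij, hjm, hj⟩ := ih hm
      exact ⟨j, hij, by omega, hj⟩
    · exact ⟨m, him, by omega, not_lt.1 hm, hn⟩

theorem sub_mul_mem_of_forall_sub_mem {B : Set ℤ} {t : ℤ} (hB : ∀ x ∈ B, x - t ∈ B) {x : ℤ}
    (hx : x ∈ B) (k : ℕ) : x - k * t ∈ B := by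
  induction k with
  | zero => simpa using hx
  | succ k ih => convert hB _ ih using 1; push_cast; ring

theorem tMax_image_intCast_add {t : ℕ} (ht : 0 < t) {B : Set ℤ} (hB : ∀ x ∈ B, x - t ∈ B)
    (c : ℚ) : tMax t ((fun x : ℤ => (x : ℚ) + c) '' B) =
      (fun x : ℤ => (x : ℚ) + c) '' {x | x ∈ B ∧ x + t ∉ B} := by
  ext y
  constructor
  · rintro ⟨⟨x, hx, rfl⟩, hmax⟩
    refine ⟨x, ⟨hx, fun hxt => ?_⟩, rfl⟩
    have := hmax _ ⟨x + t, hxt, rfl⟩ ⟨1, by push_cast; ring⟩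
    push_cast at this
    have : (0 : ℚ) < t := by exact_mod_cast ht
    linarith
  · rintro ⟨x, ⟨hx, hxt⟩, rfl⟩
    refine ⟨⟨x, hx, rfl⟩, ?_⟩
    rintro _ ⟨z, hz, rfl⟩ ⟨k, hk⟩
    have hzk : z = x + k * t := by exact_mod_cast (by linarith : (z : ℚ) = x + k * t)
    suffices z ≤ x by simpa using this
    by_contra! hxz
    have hk : 1 ≤ k := by
      by_contra! hk
      nlinarith [show (0 : ℤ) < t by exact_mod_cast ht]
    apply hxt
    convert sub_mul_mem_of_forall_sub_mem hB hz (k - 1).toNat using 1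
    rw [hzk, Int.toNat_of_nonneg (by omega)]
    ring

namespace Finset

variable (F : Finset ℤ) {a s : ℤ} (hge : ∀ x ∈ F, a ≤ x) (hsub : ∀ x ∈ F, a + s ≤ x → x - s ∈ F)
include hge hsub

theorem image_sub_filter_le_eq_filter_add_mem :
    {x ∈ F | a + s ≤ x}.image (· - s) = {x ∈ F | x + s ∈ F} := by
  ext y
  simp only [mem_image, mem_filter]
  constructor
  · rintro ⟨x, ⟨hx, hax⟩, rfl⟩
    exact ⟨hsub x hx hax, by simpa using hx⟩
  · rintro ⟨hy, hys⟩
    exact ⟨y + s, ⟨hys, by linarith [hge y hy]⟩, by ring⟩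

theorem card_filter_add_notMem : #{x ∈ F | x + s ∉ F} = #{x ∈ F | x < a + s} := by
  have htop := card_filter_add_card_filter_not (s := F) (fun x => x + s ∈ F)
  have hlow := card_filter_add_card_filter_not (s := F) (fun x => a + s ≤ x)
  rw [← image_sub_filter_le_eq_filter_add_mem F hge hsub,
    card_image_of_injective _ (sub_left_injective)] at htop
  simp only [not_le] at hlow
  omega

theorem sum_filter_add_notMem :
    ∑ x ∈ F with x + s ∉ F, x = ∑ x ∈ F with x < a + s, x + #{x ∈ F | a + s ≤ x} * s := by
  have htop := sum_filter_add_sum_filter_not F (fun x => x + s ∈ F) (fun x => x)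
  have hlow := sum_filter_add_sum_filter_not F (fun x => a + s ≤ x) (fun x => x)
  rw [← image_sub_filter_le_eq_filter_add_mem F hge hsub,
    sum_image (sub_left_injective.injOn), sum_sub_distrib, sum_const, nsmul_eq_mul] at htop
  simp only [not_le] at hlow
  linarith

end Finset

namespace YoungDiagram

variable (Y : YoungDiagram)

def beta (i : ℕ) : ℤ := Y.rowLen i - (i + 1)

theorem rowLen_eq_beta (i : ℕ) : (Y.rowLen i : ℤ) = Y.beta i + i + 1 := by
  simp only [beta]; ring

theorem beta_add_add_le (i k : ℕ) : Y.beta (i + k) + k ≤ Y.beta i := by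
  have := Y.rowLen_anti i (i + k) (by omega)
  simp only [beta]
  omega

theorem beta_strictAnti : StrictAnti Y.beta :=
  strictAnti_nat_of_succ_lt fun i => by have := Y.beta_add_add_le i 1; omega

theorem beta_of_colLen_le {i : ℕ} (hi : Y.colLen 0 ≤ i) : Y.beta i = -(i + 1) := by
  have : Y.rowLen i = 0 := by
    by_contra h
    have := Y.mem_iff_lt_colLen.1 (Y.mem_iff_lt_rowLen.2 (Nat.pos_of_ne_zero h))
    omega
  simp [beta, this]

theorem mem_range_beta_of_le {x : ℤ} (hx : x ≤ -(Y.colLen 0 + 1)) : x ∈ Set.range Y.beta :=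
  ⟨(-x - 1).toNat, by rw [Y.beta_of_colLen_le (by omega)]; omega⟩

/-- A gap `β i - k` in the beta-set is the hook length of the cell in row `i` lying in the column
where the beta-numbers jump over the value `β i - k`. -/
theorem exists_hook_eq_of_sub_notMem {i k : ℕ} (h : Y.beta i - k ∉ Set.range Y.beta) :
    ∃ c ∈ Y.cells, Y.hook c = k := by
  have hne : ∀ j, Y.beta j ≠ Y.beta i - k := fun j hj => h ⟨j, hj⟩
  obtain ⟨j, -, hjk, hj, hj1⟩ := Nat.exists_le_apply_and_apply_succ_lt Y.beta
    (Nat.le_add_right i k) (by omega)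
    (lt_of_le_of_ne (by linarith [Y.beta_add_add_le i k]) (hne _))
  have hj' := lt_of_le_of_ne hj (hne j).symm
  have hrow := Y.rowLen_eq_beta
  have hM : 0 ≤ Y.beta i - k + j + 1 := by have := hrow (j + 1); omega
  set M := (Y.beta i - k + j + 1).toNat
  have hcol : Y.colLen M = j + 1 := by
    have hin : (j, M) ∈ Y := Y.mem_iff_lt_rowLen.2 (by have := hrow j; omega)
    have hout : (j + 1, M) ∉ Y := by
      rw [Y.mem_iff_lt_rowLen]; have := hrow (j + 1); omega
    rw [Y.mem_iff_lt_colLen] at hin hout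
    omega
  have hi := hrow i
  refine ⟨(i, M), (Y.mem_cells _).2 (Y.mem_iff_lt_rowLen.2 (by omega)), ?_⟩
  simp only [hook, hcol]
  omega

theorem IsCore.sub_mem_range_beta {Y : YoungDiagram} {t : ℕ} (hY : Y.IsCore t) {x : ℤ}
    (hx : x ∈ Set.range Y.beta) : x - t ∈ Set.range Y.beta := by
  obtain ⟨i, rfl⟩ := hx
  by_contra h
  obtain ⟨c, hc, hct⟩ := Y.exists_hook_eq_of_sub_notMem h
  exact hY c hc (hct ▸ dvd_rfl)

theorem mem_image_range_beta_iff {N : ℕ} (hN : Y.colLen 0 < N) {x : ℤ} :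
    x ∈ (range N).image Y.beta ↔ x ∈ Set.range Y.beta ∧ -(N : ℤ) ≤ x := by
  have hlast : Y.beta (N - 1) = -N := by rw [Y.beta_of_colLen_le (by omega)]; omega
  simp only [mem_image, mem_range, Set.mem_range]
  constructor
  · rintro ⟨i, hi, rfl⟩
    exact ⟨⟨i, rfl⟩, hlast ▸ Y.beta_strictAnti.antitone (by omega)⟩
  · rintro ⟨⟨i, rfl⟩, hx⟩
    refine ⟨i, ?_, rfl⟩
    by_contra! hi
    have := Y.beta_strictAnti (show N - 1 < i by omega)
    omega

theorem Wset_eq_image (t : ℕ) :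
    Wset t Y = (fun x : ℤ => (x : ℚ) + (t + 1) / 2) '' Set.range Y.beta := by
  ext x
  simp only [Wset, beta, Set.mem_ofPred_eq, Set.mem_image, Set.mem_range, exists_exists_eq_and]
  refine exists_congr fun i => ?_
  push_cast
  exact eq_comm

theorem filter_lt_image_range_beta {t N : ℕ} (hN : Y.colLen 0 + t < N) :
    {x ∈ (range N).image Y.beta | x < -(N : ℤ) + t} =
      (range t).image (fun k : ℕ => -(N : ℤ) + k) := by
  ext x
  simp only [mem_filter, Y.mem_image_range_beta_iff (by omega : Y.colLen 0 < N), mem_image,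
    mem_range]
  constructor
  · rintro ⟨⟨-, hNx⟩, hxt⟩
    exact ⟨(x + N).toNat, by omega, by omega⟩
  · rintro ⟨k, hk, rfl⟩
    exact ⟨⟨Y.mem_range_beta_of_le (by omega), by omega⟩, by omega⟩

theorem coe_filter_add_notMem_image_range_beta {t N : ℕ} (hN : Y.colLen 0 + t < N) :
    (({x ∈ (range N).image Y.beta | x + t ∉ (range N).image Y.beta} : Finset ℤ) : Set ℤ) =
      {x | x ∈ Set.range Y.beta ∧ x + t ∉ Set.range Y.beta} := by
  ext x
  simp only [coe_filter, Y.mem_image_range_beta_iff (by omega : Y.colLen 0 < N),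
    Set.mem_ofPred_eq]
  constructor
  · rintro ⟨⟨hx, hxN⟩, hxt⟩
    exact ⟨hx, fun h => hxt ⟨h, by omega⟩⟩
  · rintro ⟨hx, hxt⟩
    have hxN : -(N : ℤ) ≤ x := by
      by_contra!
      exact hxt (Y.mem_range_beta_of_le (by omega))
    exact ⟨⟨hx, hxN⟩, fun h => hxt h.1⟩

theorem IsCore.exists_finset_eq_setOf_add_notMem {t : ℕ} {Y : YoungDiagram} (hY : Y.IsCore t) :
    ∃ V : Finset ℤ, (V : Set ℤ) = {x | x ∈ Set.range Y.beta ∧ x + t ∉ Set.range Y.beta} ∧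
      #V = t ∧ 2 * ∑ x ∈ V, x = -((t : ℤ) * (t + 1)) := by
  have hN : Y.colLen 0 + t < Y.colLen 0 + t + 1 := Nat.lt_succ_self _
  set N := Y.colLen 0 + t + 1
  set F := (range N).image Y.beta
  have hF : ∀ x, x ∈ F ↔ x ∈ Set.range Y.beta ∧ -(N : ℤ) ≤ x := fun x =>
    Y.mem_image_range_beta_iff (by omega)
  have hge : ∀ x ∈ F, -(N : ℤ) ≤ x := fun x hx => ((hF x).1 hx).2
  have hsub : ∀ x ∈ F, -(N : ℤ) + t ≤ x → x - t ∈ F := fun x hx hxN =>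
    (hF (x - t)).2 ⟨hY.sub_mem_range_beta ((hF x).1 hx).1, by omega⟩
  have hinj : Function.Injective fun k : ℕ => -(N : ℤ) + k := fun _ _ h => by simpa using h
  have hlow : #{x ∈ F | x < -(N : ℤ) + t} = t := by
    rw [Y.filter_lt_image_range_beta hN, card_image_of_injective _ hinj, card_range]
  refine ⟨{x ∈ F | x + t ∉ F}, Y.coe_filter_add_notMem_image_range_beta hN, ?_, ?_⟩
  · rw [card_filter_add_notMem F hge hsub, hlow]
  · have hcardF : #F = N :=
      (card_image_of_injective _ Y.beta_strictAnti.injective).trans (card_range N)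
    have hsplit := card_filter_add_card_filter_not (s := F) (fun x => -(N : ℤ) + t ≤ x)
    simp only [not_le] at hsplit
    have hgauss := sum_range_id_mul_two t
    rw [Nat.mul_sub_one] at hgauss
    zify [Nat.le_mul_self t] at hgauss
    rw [sum_filter_add_notMem F hge hsub, Y.filter_lt_image_range_beta hN, sum_image hinj.injOn,
      sum_add_distrib, sum_const, card_range, nsmul_eq_mul,
      show (#{x ∈ F | -(N : ℤ) + t ≤ x} : ℤ) = N - t by omega]
    linear_combination hgauss

end YoungDiagram

/-- the t-maximal elements of W(λ) sum to 0 for a t-core λ. -/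
theorem stmt_2 (t : ℕ) (ht : 0 < t) (Y : YoungDiagram) (hY : Y.IsCore t)
    (S : Finset ℚ) (hS : (S : Set ℚ) = tMax t (Wset t Y)) :
    ∑ x ∈ S, x = 0 := by
  obtain ⟨V, hV, hcard, hsum⟩ := hY.exists_finset_eq_setOf_add_notMem
  have hSV : S = V.image (fun x : ℤ => (x : ℚ) + (t + 1) / 2) := by
    apply coe_injective
    rw [hS, coe_image, hV, Y.Wset_eq_image,
      tMax_image_intCast_add ht fun _ => hY.sub_mem_range_beta]
  rw [hSV, sum_image (fun _ _ _ _ h => by simpa using h), sum_add_distrib, sum_const, hcard,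
    nsmul_eq_mul]
  have hsumQ := congrArg (Int.cast : ℤ → ℚ) hsum
  push_cast at hsumQ
  linear_combination hsumQ / 2
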